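/- Let A be a commutative ring, let K be a bounded cochain complex of flat A-modules with K^j = 0 for all j < 0, and let c ≥ 0 be an integer such that H^j(K) is a projective A-module for every j > c. Then for every A-module F there is an isomorphism of A-modules H^c(K ⊗_A F) ≅ H^c(K) ⊗_A F, where K ⊗_A F denotes the cochain complex with term K^j ⊗_A F in degree j and differentials d^j ⊗ id_F. -/

import Mathlib

open CategoryTheory CategoryTheory.Limits TensorProduct

universe u

/-- The cochain complex `K ⊗_A F`, with term `K^j ⊗_A F` in degree `j` and differentials
`d^j ⊗ id_F`. -/
noncomputable def tensorComplex {A : Type u} [CommRing A]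
    (K : CochainComplex (ModuleCat.{u} A) ℤ) (F : Type u) [AddCommGroup F] [Module A F] :
    CochainComplex (ModuleCat.{u} A) ℤ where
  X j := ModuleCat.of A (K.X j ⊗[A] F)
  d i j := ModuleCat.ofHom (LinearMap.rTensor F (K.d i j).hom)
  shape i j h := by
    have : K.d i j = 0 := K.shape i j h
    apply ModuleCat.hom_ext
    change LinearMap.rTensor F (K.d i j).hom = 0
    rw [this, ModuleCat.hom_zero, LinearMap.rTensor_zero]
  d_comp_d' i j k _ _ := by
    apply ModuleCat.hom_ext
    change ((K.d j k).hom.rTensor F).comp ((K.d i j).hom.rTensor F) = 0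
    rw [← LinearMap.rTensor_comp]
    have : (K.d j k).hom.comp (K.d i j).hom = 0 := by
      rw [← ModuleCat.hom_comp, K.d_comp_d i j k, ModuleCat.hom_zero]
    rw [this, LinearMap.rTensor_zero]

/-!
Write `Bʲ = im dʲ⁻¹` and `Qʲ = Kʲ ⧸ Bʲ`. By descending induction, `Qʲ` is flat for every `j > c`:
it vanishes for large `j`, and `Qʲ` is an extension of `Bʲ⁺¹` by `Hʲ`, where `Bʲ⁺¹` is flat as the
kernel of the surjection `Kʲ⁺¹ → Qʲ⁺¹` of flat modules. In degree `c`, flatness of `Bᶜ⁺¹` makes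
`Zᶜ ⊗ F → Kᶜ ⊗ F` injective, flatness of `Qᶜ⁺¹` makes `Bᶜ⁺¹ ⊗ F → Kᶜ⁺¹ ⊗ F` injective, so that
`Zᶜ ⊗ F = ker (dᶜ ⊗ F)`; right exactness of `- ⊗ F` then identifies the boundaries.
-/

namespace Module.Flat

variable {R : Type*} [CommRing R] {M N P : Type*}
  [AddCommGroup M] [Module R M] [AddCommGroup N] [Module R N] [AddCommGroup P] [Module R P]
  {f : M →ₗ[R] N} {g : N →ₗ[R] P}

theorem rTensor_injective_of_exact [Flat R P] (hf : Function.Injective f)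
    (hfg : Function.Exact f g) (hg : Function.Surjective g) (X : Type*) [AddCommGroup X]
    [Module R X] : Function.Injective (f.rTensor X) := by
  rw [← LinearMap.lTensor_inj_iff_rTensor_inj]
  exact LinearMap.lTensor_injective_of_exact_of_flat g hg f hf hfg X

theorem of_flat_middle_of_flat_right [Flat R N] [Flat R P] (hf : Function.Injective f)
    (hfg : Function.Exact f g) (hg : Function.Surjective g) : Flat R M := by
  rw [iff_lTensor_preserves_injective_linearMap]
  intro X Y _ _ _ _ i hi
  refine Function.Injective.of_comp (f := f.rTensor Y) ?_
  rw [← LinearMap.coe_comp, LinearMap.rTensor_comp_lTensor, ← LinearMap.lTensor_comp_rTensor,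
    LinearMap.coe_comp]
  exact (lTensor_preserves_injective_linearMap i hi).comp (rTensor_injective_of_exact hf hfg hg X)

theorem of_flat_left_of_flat_right [Flat R M] [Flat R P] (hf : Function.Injective f)
    (hfg : Function.Exact f g) (hg : Function.Surjective g) : Flat R N := by
  rw [iff_lTensor_preserves_injective_linearMap]
  intro X Y _ _ _ _ i hi
  exact LinearMap.injective_of_surjective_of_injective_of_injective
    (0 : Unit →ₗ[R] M ⊗[R] X) (f.rTensor X) (g.rTensor X)
    (0 : Unit →ₗ[R] M ⊗[R] Y) (f.rTensor Y) (g.rTensor Y)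
    0 (i.lTensor M) (i.lTensor N) (i.lTensor P) (by simp)
    (by rw [LinearMap.rTensor_comp_lTensor, LinearMap.lTensor_comp_rTensor])
    (by rw [LinearMap.rTensor_comp_lTensor, LinearMap.lTensor_comp_rTensor])
    ((LinearMap.exact_zero_iff_injective _ _).mpr (rTensor_injective_of_exact hf hfg hg X))
    (_root_.rTensor_exact X hfg hg)
    ((LinearMap.exact_zero_iff_injective _ _).mpr (rTensor_injective_of_exact hf hfg hg Y))
    (fun _ ↦ ⟨0, rfl⟩)
    (lTensor_preserves_injective_linearMap i hi) (lTensor_preserves_injective_linearMap i hi)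

end Module.Flat

namespace LinearMap

variable {R : Type*} [CommRing R] {N P : Type*} [AddCommGroup N] [Module R N]
  [AddCommGroup P] [Module R P] (g : N →ₗ[R] P) (F : Type*) [AddCommGroup F] [Module R F]

theorem rTensor_ker_subtype_injective [Module.Flat R (range g)] :
    Function.Injective ((ker g).subtype.rTensor F) :=
  Module.Flat.rTensor_injective_of_exact (ker g).injective_subtype
    (by rw [exact_iff, ker_rangeRestrict, Submodule.range_subtype]) g.surjective_rangeRestrict F

theorem ker_rTensor_eq_range_rTensor_ker_subtype [Module.Flat R (P ⧸ range g)] :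
    ker (g.rTensor F) = range ((ker g).subtype.rTensor F) := by
  have hι : ker ((range g).subtype.rTensor F) = ⊥ := ker_eq_bot.mpr <|
    Module.Flat.rTensor_injective_of_exact (range g).injective_subtype
      (exact_subtype_mkQ (range g)) (Submodule.mkQ_surjective _) F
  have hg : (range g).subtype ∘ₗ g.rangeRestrict = g := rfl
  conv_lhs => rw [← hg, rTensor_comp, ker_comp_of_ker_eq_bot _ hι]
  exact (rTensor_exact F (by rw [exact_iff, ker_rangeRestrict, Submodule.range_subtype])
    g.surjective_rangeRestrict).linearMap_ker_eq

noncomputable def rTensorKerEquiv [Module.Flat R (range g)] [Module.Flat R (P ⧸ range g)] :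
    ker g ⊗[R] F ≃ₗ[R] ker (g.rTensor F) :=
  LinearEquiv.ofInjective _ (g.rTensor_ker_subtype_injective F) ≪≫ₗ
    LinearEquiv.ofEq _ _ (g.ker_rTensor_eq_range_rTensor_ker_subtype F).symm

end LinearMap

namespace CategoryTheory.ShortComplex

open LinearMap

variable {A : Type u} [CommRing A] (S : ShortComplex (ModuleCat.{u} A))

noncomputable def rTensor (F : Type u) [AddCommGroup F] [Module A F] :
    ShortComplex (ModuleCat.{u} A) :=
  moduleCatMk (S.f.hom.rTensor F) (S.g.hom.rTensor F) (by
    rw [← rTensor_comp, ← ModuleCat.hom_comp, S.zero, ModuleCat.hom_zero, rTensor_zero])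

noncomputable def rTensorHomologyEquiv (F : Type u) [AddCommGroup F] [Module A F]
    [Module.Flat A (range S.g.hom)] [Module.Flat A (S.X₃ ⧸ range S.g.hom)] :
    (S.rTensor F).homology ≃ₗ[A] S.homology ⊗[A] F :=
  let e := S.g.hom.rTensorKerEquiv F
  have he : e.toLinearMap ∘ₗ S.moduleCatToCycles.rTensor F = (S.rTensor F).moduleCatToCycles :=
    ext fun w ↦ Subtype.ext (rTensor_comp_apply F _ _ w).symm
  (S.rTensor F).moduleCatHomologyIso.toLinearEquiv ≪≫ₗ
    (Submodule.Quotient.equiv _ _ e (by rw [← range_comp, he]; rfl)).symm ≪≫ₗ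
    _root_.rTensor.equiv F (exact_map_mkQ_range S.moduleCatToCycles)
      (Submodule.mkQ_surjective _) ≪≫ₗ
    LinearEquiv.rTensor F S.moduleCatHomologyIso.symm.toLinearEquiv

/-- `X₂ ⧸ im f` is an extension of `im g` by the homology `ker g ⧸ im f`. -/
theorem flat_quotient_range_f [Module.Flat A (range S.g.hom)] [Module.Flat A S.homology] :
    Module.Flat A (S.X₂ ⧸ range S.f.hom) := by
  have : Module.Flat A (ker S.g.hom ⧸ range S.moduleCatToCycles) :=
    .of_linearEquiv S.moduleCatHomologyIso.symm.toLinearEquiv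
  let ι := (range S.moduleCatToCycles).mapQ (range S.f.hom) (ker S.g.hom).subtype
    (by rintro _ ⟨x, rfl⟩; exact ⟨x, rfl⟩)
  let π := (range S.f.hom).liftQ S.g.hom.rangeRestrict
    (by rintro _ ⟨x, rfl⟩; exact Subtype.ext (S.moduleCat_zero_apply x))
  refine Module.Flat.of_flat_left_of_flat_right (f := ι) (g := π) ?_ ?_ ?_
  · rw [← ker_eq_bot, Submodule.ker_mapQ, eq_bot_iff, Submodule.map_le_iff_le_comap,
      Submodule.comap_bot, Submodule.ker_mkQ]
    rintro z ⟨w, hw⟩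
    exact ⟨w, Subtype.ext hw⟩
  · rw [exact_iff, Submodule.ker_liftQ, ker_rangeRestrict, Submodule.range_mapQ,
      Submodule.range_subtype]
  · exact surjective_range_liftQ _ S.g.hom.surjective_rangeRestrict

end CategoryTheory.ShortComplex

namespace CochainComplex

open LinearMap

variable {A : Type u} [CommRing A] (K : CochainComplex (ModuleCat.{u} A) ℤ)

theorem flat_quotient_range_sc_g {j k : ℤ} (hjk : j + 1 = k)
    (hQ : Module.Flat A (K.X k ⧸ range (K.dTo k).hom)) :
    Module.Flat A ((K.sc j).X₃ ⧸ range (K.sc j).g.hom) := by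
  obtain rfl := (ComplexShape.up ℤ).next_eq' hjk
  -- the type of `dTo` mentions `xPrev`, which would make the motive of the rewrite ill-typed
  change Module.Flat A (K.X _ ⧸ range (K.d ((ComplexShape.up ℤ).prev _) _).hom) at hQ
  rwa [(ComplexShape.up ℤ).prev_eq' hjk] at hQ

theorem flat_range_sc_g (hflat : ∀ j, Module.Flat A (K.X j)) {j k : ℤ} (hjk : j + 1 = k)
    (hQ : Module.Flat A (K.X k ⧸ range (K.dTo k).hom)) :
    Module.Flat A (range (K.sc j).g.hom) :=
  have : Module.Flat A (K.sc j).X₃ := hflat _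
  have := K.flat_quotient_range_sc_g hjk hQ
  .of_flat_middle_of_flat_right (range _).injective_subtype (exact_subtype_mkQ _)
    (Submodule.mkQ_surjective _)

theorem flat_quotient_range_dTo_of_flat_homology (hflat : ∀ j, Module.Flat A (K.X j))
    (hbdd : ∃ b : ℤ, ∀ j : ℤ, b < j → IsZero (K.X j)) {c : ℤ}
    (hH : ∀ j, c < j → Module.Flat A (K.homology j)) :
    ∀ j, c < j → Module.Flat A (K.X j ⧸ range (K.dTo j).hom) := by
  obtain ⟨b, hb⟩ := hbdd
  have hzero (j : ℤ) (hj : b < j) : Module.Flat A (K.X j ⧸ range (K.dTo j).hom) :=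
    have := ModuleCat.subsingleton_of_isZero (hb j hj)
    inferInstance
  intro j hcj
  obtain hbj | hjb := lt_or_ge b j
  · exact hzero j hbj
  have hj : j ≤ b + 1 := by omega
  clear hjb
  induction j, hj using Int.leInductionDown with
  | base => exact hzero _ (lt_add_one b)
  | pred n _ ih =>
    have := K.flat_range_sc_g hflat (sub_add_cancel n 1) (ih (by omega))
    have : Module.Flat A (K.sc (n - 1)).homology := hH (n - 1) hcj
    exact (K.sc (n - 1)).flat_quotient_range_f

end CochainComplex

theorem homology_tensor_of_projective_above_general {A : Type u} [CommRing A]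
    (K : CochainComplex (ModuleCat.{u} A) ℤ)
    (hflat : ∀ j : ℤ, Module.Flat A (K.X j))
    (hbdd : ∃ b : ℤ, ∀ j : ℤ, b < j → IsZero (K.X j))
    (c : ℤ)
    (hproj : ∀ j : ℤ, c < j → Projective (K.homology j))
    (F : Type u) [AddCommGroup F] [Module A F] :
    Nonempty (((tensorComplex K F).homology c) ≃ₗ[A] ((K.homology c) ⊗[A] F)) := by
  have hQ := K.flat_quotient_range_dTo_of_flat_homology hflat hbdd
    (fun j hj ↦ have := hproj j hj; inferInstance) (c + 1) (lt_add_one c)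
  have := K.flat_quotient_range_sc_g rfl hQ
  have := K.flat_range_sc_g hflat rfl hQ
  exact ⟨(K.sc c).rTensorHomologyEquiv F⟩

/-- Let `A` be a commutative ring, `K` a bounded cochain complex of flat
`A`-modules with `K^j = 0` for `j < 0`, and `c ≥ 0` an integer such that `H^j(K)` is a
projective `A`-module for every `j > c`.  Then for every `A`-module `F` there is an
isomorphism of `A`-modules `H^c(K ⊗_A F) ≅ H^c(K) ⊗_A F`. -/
theorem homology_tensor_of_projective_above {A : Type u} [CommRing A]
    (K : CochainComplex (ModuleCat.{u} A) ℤ)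
    (hflat : ∀ j : ℤ, Module.Flat A (K.X j))
    (hK0 : ∀ j : ℤ, j < 0 → IsZero (K.X j))
    (hbdd : ∃ b : ℤ, ∀ j : ℤ, b < j → IsZero (K.X j))
    (c : ℤ) (hc : 0 ≤ c)
    (hproj : ∀ j : ℤ, c < j → Projective (K.homology j))
    (F : Type u) [AddCommGroup F] [Module A F] :
    Nonempty (((tensorComplex K F).homology c) ≃ₗ[A] ((K.homology c) ⊗[A] F)) :=
  homology_tensor_of_projective_above_general K hflat hbdd c hproj F
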